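/- No local strategy using a rank-3 (W-class) state wins the three-player game with certainty: if a unit vector ψ ∈ ℂ²⊗ℂ²⊗ℂ² satisfies T(ψ) ≠ 0 and Det ψ = 0, then for every choice of unitary 2×2 matrices R₀, R₁, S₀, S₁, T₀, T₁ there exist a question (r,s,t) ∈ Q and an outcome (A,B,C) with A⊕B⊕C ≠ r∨s∨t such that ψ^{rst}_{ABC} ≠ 0; equivalently, the winning probability is strictly less than 1. -/

import Mathlib

open scoped BigOperators

/-- A three-qubit state: a tensor with indices `A B C : Fin 2` and complex entries. -/
abbrev QState := Fin 2 → Fin 2 → Fin 2 → ℂ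

/-- The antisymmetric epsilon tensor on `{0,1}` with `ε 0 1 = 1`. -/
noncomputable def eps : Fin 2 → Fin 2 → ℂ := fun i j =>
  if i = 0 ∧ j = 1 then 1 else if i = 1 ∧ j = 0 then -1 else 0

/-- The gamma matrix associated to the first (A) slot. -/
noncomputable def gammaA (a : QState) : Matrix (Fin 2) (Fin 2) ℂ :=
  Matrix.of fun A₁ A₂ => ∑ B₁, ∑ B₂, ∑ C₁, ∑ C₂,
    eps B₁ B₂ * eps C₁ C₂ * a A₁ B₁ C₁ * a A₂ B₂ C₂

/-- The gamma matrix associated to the second (B) slot. -/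
noncomputable def gammaB (a : QState) : Matrix (Fin 2) (Fin 2) ℂ :=
  Matrix.of fun B₁ B₂ => ∑ C₁, ∑ C₂, ∑ A₁, ∑ A₂,
    eps C₁ C₂ * eps A₁ A₂ * a A₁ B₁ C₁ * a A₂ B₂ C₂

/-- The gamma matrix associated to the third (C) slot. -/
noncomputable def gammaC (a : QState) : Matrix (Fin 2) (Fin 2) ℂ :=
  Matrix.of fun C₁ C₂ => ∑ A₁, ∑ A₂, ∑ B₁, ∑ B₂,
    eps A₁ A₂ * eps B₁ B₂ * a A₁ B₁ C₁ * a A₂ B₂ C₂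

/-- The (cubic) triple product `T(a)_{A₃B₁C₁} = ε^{A₁A₂} a_{A₁B₁C₁} γ^A(a)_{A₂A₃}`. -/
noncomputable def Trip (a : QState) : QState := fun A₃ B₁ C₁ =>
  ∑ A₁, ∑ A₂, eps A₁ A₂ * a A₁ B₁ C₁ * gammaA a A₂ A₃

/-- The symplectic bilinear form `{a,b} = ε^{AA'} ε^{BB'} ε^{CC'} a_{ABC} b_{A'B'C'}`. -/
noncomputable def symp (a b : QState) : ℂ :=
  ∑ A, ∑ A', ∑ B, ∑ B', ∑ C, ∑ C',
    eps A A' * eps B B' * eps C C' * a A B C * b A' B' C'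

/-- Cayley's hyperdeterminant of a three-qubit state. -/
noncomputable def CayleyDet (a : QState) : ℂ :=
  (a 0 0 0)^2 * (a 1 1 1)^2 + (a 0 0 1)^2 * (a 1 1 0)^2
    + (a 0 1 0)^2 * (a 1 0 1)^2 + (a 0 1 1)^2 * (a 1 0 0)^2
  - 2 * ( a 0 0 0 * a 0 0 1 * a 1 1 0 * a 1 1 1
        + a 0 0 0 * a 0 1 0 * a 1 0 1 * a 1 1 1
        + a 0 0 0 * a 0 1 1 * a 1 0 0 * a 1 1 1
        + a 0 0 1 * a 0 1 0 * a 1 0 1 * a 1 1 0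
        + a 0 0 1 * a 0 1 1 * a 1 0 0 * a 1 1 0
        + a 0 1 0 * a 0 1 1 * a 1 0 0 * a 1 0 1 )
  + 4 * ( a 0 0 0 * a 0 1 1 * a 1 0 1 * a 1 1 0
        + a 0 0 1 * a 0 1 0 * a 1 0 0 * a 1 1 1 )

/-- Local transformation of a state by 2×2 matrices acting on the three slots. -/
noncomputable def transform (R S T : Matrix (Fin 2) (Fin 2) ℂ) (ψ : QState) : QState :=
  fun A B C => ∑ A', ∑ B', ∑ C', R A A' * S B B' * T C C' * ψ A' B' C'

/-- The question set of the three-player GHZ game. -/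
def Questions : Finset (Fin 2 × Fin 2 × Fin 2) := {(0,0,0), (0,1,1), (1,0,1), (1,1,0)}

/-- Disjunction `r ∨ s ∨ t` of bits represented as elements of `Fin 2`. -/
noncomputable def orr (r s t : Fin 2) : Fin 2 := if r = 1 ∨ s = 1 ∨ t = 1 then 1 else 0

/-- The winning probability of the local strategy `(ψ, R, S, T)` in the three-player
GHZ game; note `A + B + C` in `Fin 2` is addition mod 2. -/
noncomputable def winProb (ψ : QState) (R S T : Fin 2 → Matrix (Fin 2) (Fin 2) ℂ) : ℝ :=
  (1/4) * ∑ q ∈ Questions, ∑ A, ∑ B, ∑ C,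
    if A + B + C = orr q.1 q.2.1 q.2.2
    then ‖transform (R q.1) (S q.2.1) (T q.2.2) ψ A B C‖ ^ 2 else 0

/-!
If the strategy won with certainty, each state `φ_q = (R_r ⊗ S_s ⊗ T_t) ψ` would be supported
on the outcomes of a single parity. Both `Det` and `T` are covariant under local invertible maps,
so `Det φ_q = 0` and `T(φ_q) ≠ 0`, and for a state supported on one parity class this forces
`T(φ_q)` to be a multiple of a single basis vector `e_{i_q}` of the other parity. As `T(φ_q)` is
proportional to `(R_r ⊗ S_s ⊗ T_t) T(ψ)`, the `k`-th index of `i_q` depends only on the matrix of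
player `k`; the four parity constraints on the `i_q` are then inconsistent, exactly as in the
classical GHZ argument.
-/

open Matrix
open scoped Kronecker

section Transform

variable (R S T : Matrix (Fin 2) (Fin 2) ℂ) (a : QState)

lemma transform_transform (R' S' T' : Matrix (Fin 2) (Fin 2) ℂ) :
    transform R S T (transform R' S' T' a) = transform (R * R') (S * S') (T * T') a := by
  funext A B C
  simp only [transform, mul_apply, Fin.sum_univ_two]
  ring

lemma transform_one : transform 1 1 1 a = a := by
  funext A B C
  simp [transform, one_apply]

lemma transform_zero : transform R S T 0 = 0 := by
  funext A B C
  simp [transform]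

lemma transform_smul (c : ℂ) : transform R S T (c • a) = c • transform R S T a := by
  funext A B C
  simp only [transform, Pi.smul_apply, smul_eq_mul, Finset.mul_sum]
  congr! 3
  ring

lemma transform_eq_slotwise :
    transform R S T a = transform R 1 1 (transform 1 S 1 (transform 1 1 T a)) := by
  simp [transform_transform]

lemma transform_apply_eq_kronecker_mulVec (A B C : Fin 2) :
    transform R S T a A B C = ((R ⊗ₖ (S ⊗ₖ T)) *ᵥ fun x => a x.1 x.2.1 x.2.2) (A, B, C) := by
  simp only [transform, mulVec, dotProduct, Fintype.sum_prod_type, kroneckerMap_apply, mul_assoc]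

lemma trip_transform_left : Trip (transform R 1 1 a) = R.det • transform R 1 1 (Trip a) := by
  funext A B C
  fin_cases A <;> fin_cases B <;> fin_cases C <;>
    (simp [Trip, gammaA, transform, eps, det_fin_two, one_apply, Fin.sum_univ_two]; ring)

lemma trip_transform_middle : Trip (transform 1 S 1 a) = S.det • transform 1 S 1 (Trip a) := by
  funext A B C
  fin_cases A <;> fin_cases B <;> fin_cases C <;>
    (simp [Trip, gammaA, transform, eps, det_fin_two, one_apply, Fin.sum_univ_two]; ring)

lemma trip_transform_right : Trip (transform 1 1 T a) = T.det • transform 1 1 T (Trip a) := by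
  funext A B C
  fin_cases A <;> fin_cases B <;> fin_cases C <;>
    (simp [Trip, gammaA, transform, eps, det_fin_two, one_apply, Fin.sum_univ_two]; ring)

lemma trip_transform :
    Trip (transform R S T a) = (R.det * S.det * T.det) • transform R S T (Trip a) := by
  rw [transform_eq_slotwise, trip_transform_left, trip_transform_middle,
    trip_transform_right]
  simp only [transform_smul, smul_smul]
  rw [← transform_eq_slotwise, mul_assoc]

lemma cayleyDet_transform_left : CayleyDet (transform R 1 1 a) = R.det ^ 2 * CayleyDet a := by
  simp [CayleyDet, transform, det_fin_two, one_apply, Fin.sum_univ_two]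
  ring

lemma cayleyDet_transform_middle : CayleyDet (transform 1 S 1 a) = S.det ^ 2 * CayleyDet a := by
  simp [CayleyDet, transform, det_fin_two, one_apply, Fin.sum_univ_two]
  ring

lemma cayleyDet_transform_right : CayleyDet (transform 1 1 T a) = T.det ^ 2 * CayleyDet a := by
  simp [CayleyDet, transform, det_fin_two, one_apply, Fin.sum_univ_two]
  ring

lemma cayleyDet_transform :
    CayleyDet (transform R S T a) = (R.det * S.det * T.det) ^ 2 * CayleyDet a := by
  rw [transform_eq_slotwise, cayleyDet_transform_left,
    cayleyDet_transform_middle, cayleyDet_transform_right]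
  ring

end Transform

section Unitary

variable {R S T : Matrix (Fin 2) (Fin 2) ℂ}

lemma transform_conjTranspose_transform (hR : Rᴴ * R = 1) (hS : Sᴴ * S = 1) (hT : Tᴴ * T = 1)
    (a : QState) : transform Rᴴ Sᴴ Tᴴ (transform R S T a) = a := by
  rw [transform_transform, hR, hS, hT, transform_one]

lemma transform_ne_zero (hR : Rᴴ * R = 1) (hS : Sᴴ * S = 1) (hT : Tᴴ * T = 1) {a : QState}
    (ha : a ≠ 0) : transform R S T a ≠ 0 := fun h => ha <| by
  rw [← transform_conjTranspose_transform hR hS hT a, h, transform_zero]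

lemma sum_norm_sq_mulVec_of_unitary {n : Type*} [Fintype n] [DecidableEq n] {M : Matrix n n ℂ}
    (hM : Mᴴ * M = 1) (v : n → ℂ) : ∑ i, ‖(M *ᵥ v) i‖ ^ 2 = ∑ i, ‖v i‖ ^ 2 := by
  have h : star (M *ᵥ v) ⬝ᵥ (M *ᵥ v) = star v ⬝ᵥ v := by
    rw [star_mulVec, dotProduct_mulVec, vecMul_vecMul, hM, vecMul_one]
  simp only [dotProduct, Pi.star_apply, RCLike.star_def, RCLike.conj_mul] at h
  exact_mod_cast h

lemma sum_norm_sq_transform (hR : Rᴴ * R = 1) (hS : Sᴴ * S = 1) (hT : Tᴴ * T = 1)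
    (a : QState) :
    ∑ A, ∑ B, ∑ C, ‖transform R S T a A B C‖ ^ 2 = ∑ A, ∑ B, ∑ C, ‖a A B C‖ ^ 2 := by
  have hK : (R ⊗ₖ (S ⊗ₖ T))ᴴ * (R ⊗ₖ (S ⊗ₖ T)) = 1 := by
    rw [conjTranspose_kronecker, conjTranspose_kronecker, ← mul_kronecker_mul,
      ← mul_kronecker_mul, hR, hS, hT, one_kronecker_one, one_kronecker_one]
  simp only [transform_apply_eq_kronecker_mulVec]
  have := sum_norm_sq_mulVec_of_unitary hK fun x => a x.1 x.2.1 x.2.2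
  simpa only [Fintype.sum_prod_type] using this

end Unitary

def IsMonomialAt (v : QState) (i : Fin 2 × Fin 2 × Fin 2) : Prop :=
  v i.1 i.2.1 i.2.2 ≠ 0 ∧ ∀ A B C : Fin 2, (A, B, C) ≠ i → v A B C = 0

namespace IsMonomialAt

variable {v : QState} {i j : Fin 2 × Fin 2 × Fin 2}

lemma of_vanishes_off (hv : v ≠ 0) (hoff : ∀ A B C : Fin 2, (A, B, C) ≠ i → v A B C = 0) :
    IsMonomialAt v i := by
  refine ⟨fun hi => hv ?_, hoff⟩
  funext A B C
  by_cases h : (A, B, C) = i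
  · subst h; exact hi
  · exact hoff A B C h

lemma of_smul {c : ℂ} (hc : c ≠ 0) (h : IsMonomialAt (c • v) i) : IsMonomialAt v i :=
  ⟨fun hi => h.1 (by simp [hi]),
    fun A B C hne => (mul_eq_zero.1 (h.2 A B C hne)).resolve_left hc⟩

lemma transform_apply (h : IsMonomialAt v i) (M₁ M₂ M₃ : Matrix (Fin 2) (Fin 2) ℂ)
    (A B C : Fin 2) :
    transform M₁ M₂ M₃ v A B C = M₁ A i.1 * M₂ B i.2.1 * M₃ C i.2.2 * v i.1 i.2.1 i.2.2 := by
  obtain ⟨a, b, c⟩ := i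
  have hoff : ∀ x y z, (x, y, z) ≠ (a, b, c) → M₁ A x * M₂ B y * M₃ C z * v x y z = 0 :=
    fun x y z hne => by rw [h.2 x y z hne, mul_zero]
  simp only [transform]
  rw [Fintype.sum_eq_single a fun x hx => Finset.sum_eq_zero fun y _ =>
      Finset.sum_eq_zero fun z _ => hoff x y z (by simp [hx]),
    Fintype.sum_eq_single b fun y hy => Finset.sum_eq_zero fun z _ => hoff a y z (by simp [hy]),
    Fintype.sum_eq_single c fun z hz => hoff a b z (by simp [hz])]

lemma apply_ne_zero_of_transform (hv : IsMonomialAt v i) {M₁ M₂ M₃ : Matrix (Fin 2) (Fin 2) ℂ}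
    (hw : IsMonomialAt (transform M₁ M₂ M₃ v) j) :
    M₁ j.1 i.1 ≠ 0 ∧ M₂ j.2.1 i.2.1 ≠ 0 ∧ M₃ j.2.2 i.2.2 ≠ 0 := by
  have := hw.1
  simp only [hv.transform_apply, mul_ne_zero_iff] at this
  exact ⟨this.1.1.1, this.1.1.2, this.1.2⟩

lemma index_eq_of_transform {τ : QState} {M₁ M₂ M₃ N₁ N₂ N₃ : Matrix (Fin 2) (Fin 2) ℂ}
    (hM₁ : M₁ᴴ * M₁ = 1) (hM₂ : M₂ᴴ * M₂ = 1) (hM₃ : M₃ᴴ * M₃ = 1)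
    (hi : IsMonomialAt (transform M₁ M₂ M₃ τ) i)
    (hj : IsMonomialAt (transform N₁ N₂ N₃ τ) j) :
    (M₁ = N₁ → i.1 = j.1) ∧ (M₂ = N₂ → i.2.1 = j.2.1) ∧ (M₃ = N₃ → i.2.2 = j.2.2) := by
  have hrel : transform N₁ N₂ N₃ τ
      = transform (N₁ * M₁ᴴ) (N₂ * M₂ᴴ) (N₃ * M₃ᴴ) (transform M₁ M₂ M₃ τ) := by
    simp only [transform_transform, Matrix.mul_assoc, hM₁, hM₂, hM₃, Matrix.mul_one]
  rw [hrel] at hj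
  obtain ⟨h₁, h₂, h₃⟩ := hi.apply_ne_zero_of_transform hj
  have index_eq {M : Matrix (Fin 2) (Fin 2) ℂ} (hM : Mᴴ * M = 1) {k l : Fin 2}
      (h : (M * Mᴴ) l k ≠ 0) : k = l := by
    rw [mul_eq_one_comm.1 hM] at h
    by_contra hkl
    exact h (one_apply_ne' hkl)
  refine ⟨?_, ?_, ?_⟩ <;> rintro rfl
  exacts [index_eq hM₁ h₁, index_eq hM₂ h₂, index_eq hM₃ h₃]

end IsMonomialAt

def SupportedOnParity (φ : QState) (p : Fin 2) : Prop :=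
  ∀ A B C : Fin 2, A + B + C ≠ p → φ A B C = 0

lemma SupportedOnParity.trip_isMonomialAt {φ : QState} {p : Fin 2}
    (hφ : SupportedOnParity φ p) (hdet : CayleyDet φ = 0) (htrip : Trip φ ≠ 0) :
    ∃ i : Fin 2 × Fin 2 × Fin 2, i.1 + i.2.1 + i.2.2 ≠ p ∧ IsMonomialAt (Trip φ) i := by
  suffices ∃ i : Fin 2 × Fin 2 × Fin 2, i.1 + i.2.1 + i.2.2 ≠ p ∧
      ∀ A B C : Fin 2, (A, B, C) ≠ i → Trip φ A B C = 0 by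
    obtain ⟨i, hi, hoff⟩ := this
    exact ⟨i, hi, .of_vanishes_off htrip hoff⟩
  -- On a state supported on parity `p`, `Det` is four times the product of the four amplitudes
  -- of parity `p`, and the entry of `T` at `i` is `±2` times the product of the three of them
  -- other than the amplitude at the complement of `i`.
  fin_cases p
  · obtain ⟨h001, h010, h100, h111⟩ : φ 0 0 1 = 0 ∧ φ 0 1 0 = 0 ∧ φ 1 0 0 = 0 ∧ φ 1 1 1 = 0 :=
      ⟨hφ _ _ _ (by decide), hφ _ _ _ (by decide), hφ _ _ _ (by decide), hφ _ _ _ (by decide)⟩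
    have hprod : φ 0 0 0 * φ 0 1 1 * φ 1 0 1 * φ 1 1 0 = 0 := by
      simp only [CayleyDet, h001, h010, h100, h111] at hdet
      linear_combination hdet / 4
    simp only [mul_eq_zero] at hprod
    rcases hprod with ((h | h) | h) | h <;>
      [refine ⟨(1, 1, 1), by decide, ?_⟩; refine ⟨(1, 0, 0), by decide, ?_⟩;
        refine ⟨(0, 1, 0), by decide, ?_⟩; refine ⟨(0, 0, 1), by decide, ?_⟩] <;>
      intro a b c hne <;> fin_cases a <;> fin_cases b <;> fin_cases c <;>
      simp [Trip, gammaA, eps, Fin.sum_univ_two, h, h001, h010, h100, h111] at hne ⊢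
  · obtain ⟨h000, h011, h101, h110⟩ : φ 0 0 0 = 0 ∧ φ 0 1 1 = 0 ∧ φ 1 0 1 = 0 ∧ φ 1 1 0 = 0 :=
      ⟨hφ _ _ _ (by decide), hφ _ _ _ (by decide), hφ _ _ _ (by decide), hφ _ _ _ (by decide)⟩
    have hprod : φ 0 0 1 * φ 0 1 0 * φ 1 0 0 * φ 1 1 1 = 0 := by
      simp only [CayleyDet, h000, h011, h101, h110] at hdet
      linear_combination hdet / 4
    simp only [mul_eq_zero] at hprod
    rcases hprod with ((h | h) | h) | h <;>
      [refine ⟨(1, 1, 0), by decide, ?_⟩; refine ⟨(1, 0, 1), by decide, ?_⟩;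
        refine ⟨(0, 1, 1), by decide, ?_⟩; refine ⟨(0, 0, 0), by decide, ?_⟩] <;>
      intro a b c hne <;> fin_cases a <;> fin_cases b <;> fin_cases c <;>
      simp [Trip, gammaA, eps, Fin.sum_univ_two, h, h000, h011, h101, h110] at hne ⊢

lemma ghz_parity_inconsistent {a b c a' b' c' : Fin 2} (h₀ : a + b + c ≠ 0)
    (h₁ : a + b' + c' ≠ 1) (h₂ : a' + b + c' ≠ 1) (h₃ : a' + b' + c ≠ 1) : False := by
  -- Summing the four parities counts every variable twice, but gives `1 + 0 + 0 + 0`.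
  revert a b c a' b' c'
  decide

theorem exists_losing_amplitude {ψ : QState} (hT : Trip ψ ≠ 0) (hDet : CayleyDet ψ = 0)
    {R S T : Fin 2 → Matrix (Fin 2) (Fin 2) ℂ} (hR : ∀ i, (R i)ᴴ * R i = 1)
    (hS : ∀ i, (S i)ᴴ * S i = 1) (hT' : ∀ i, (T i)ᴴ * T i = 1) :
    ∃ q ∈ Questions, ∃ A B C : Fin 2, A + B + C ≠ orr q.1 q.2.1 q.2.2 ∧
      transform (R q.1) (S q.2.1) (T q.2.2) ψ A B C ≠ 0 := by
  by_contra! hwin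
  have hmono (q : Fin 2 × Fin 2 × Fin 2) (hq : q ∈ Questions) :
      ∃ i : Fin 2 × Fin 2 × Fin 2, i.1 + i.2.1 + i.2.2 ≠ orr q.1 q.2.1 q.2.2 ∧
        IsMonomialAt (transform (R q.1) (S q.2.1) (T q.2.2) (Trip ψ)) i := by
    have hdet : (R q.1).det * (S q.2.1).det * (T q.2.2).det ≠ 0 :=
      mul_ne_zero (mul_ne_zero (det_ne_zero_of_left_inverse (hR _))
        (det_ne_zero_of_left_inverse (hS _))) (det_ne_zero_of_left_inverse (hT' _))
    have htrip := trip_transform (R q.1) (S q.2.1) (T q.2.2) ψ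
    obtain ⟨i, hi, hmono⟩ := SupportedOnParity.trip_isMonomialAt (hwin q hq)
      (by rw [cayleyDet_transform, hDet, mul_zero])
      (by rw [htrip]; exact smul_ne_zero hdet (transform_ne_zero (hR _) (hS _) (hT' _) hT))
    exact ⟨i, hi, (htrip ▸ hmono).of_smul hdet⟩
  obtain ⟨⟨a, b, c⟩, h₀, m₀⟩ := hmono (0, 0, 0) (by decide)
  obtain ⟨⟨a₁, b₁, c₁⟩, h₁, m₁⟩ := hmono (0, 1, 1) (by decide)
  obtain ⟨⟨a₂, b₂, c₂⟩, h₂, m₂⟩ := hmono (1, 0, 1) (by decide)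
  obtain ⟨⟨a₃, b₃, c₃⟩, h₃, m₃⟩ := hmono (1, 1, 0) (by decide)
  obtain rfl : a = a₁ := (m₀.index_eq_of_transform (hR 0) (hS 0) (hT' 0) m₁).1 rfl
  obtain rfl : b = b₂ := (m₀.index_eq_of_transform (hR 0) (hS 0) (hT' 0) m₂).2.1 rfl
  obtain rfl : c = c₃ := (m₀.index_eq_of_transform (hR 0) (hS 0) (hT' 0) m₃).2.2 rfl
  obtain rfl : c₁ = c₂ := (m₁.index_eq_of_transform (hR 0) (hS 1) (hT' 1) m₂).2.2 rfl
  obtain rfl : b₁ = b₃ := (m₁.index_eq_of_transform (hR 0) (hS 1) (hT' 1) m₃).2.1 rfl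
  obtain rfl : a₂ = a₃ := (m₂.index_eq_of_transform (hR 1) (hS 0) (hT' 1) m₃).1 rfl
  exact ghz_parity_inconsistent (by simpa [orr] using h₀) (by simpa [orr] using h₁)
    (by simpa [orr] using h₂) (by simpa [orr] using h₃)

lemma sum_ite_lt_sum_of_exists {ι : Type*} [Fintype ι] {P : ι → Prop} [DecidablePred P]
    {f : ι → ℝ} (hf : ∀ i, 0 ≤ f i) (h : ∃ i, ¬P i ∧ 0 < f i) :
    ∑ i, (if P i then f i else 0) < ∑ i, f i := by
  obtain ⟨i, hi, hfi⟩ := h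
  refine Finset.sum_lt_sum (fun j _ => ?_) ⟨i, Finset.mem_univ i, by simpa [hi] using hfi⟩
  split_ifs <;> simp [hf j]

theorem winProb_lt_one {ψ : QState} (hunit : ∑ A, ∑ B, ∑ C, ‖ψ A B C‖ ^ 2 = 1)
    {R S T : Fin 2 → Matrix (Fin 2) (Fin 2) ℂ} (hR : ∀ i, (R i)ᴴ * R i = 1)
    (hS : ∀ i, (S i)ᴴ * S i = 1) (hT : ∀ i, (T i)ᴴ * T i = 1)
    (hlose : ∃ q ∈ Questions, ∃ A B C : Fin 2, A + B + C ≠ orr q.1 q.2.1 q.2.2 ∧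
      transform (R q.1) (S q.2.1) (T q.2.2) ψ A B C ≠ 0) :
    winProb ψ R S T < 1 := by
  obtain ⟨q₀, hq₀, A₀, B₀, C₀, hA₀, hamp⟩ := hlose
  set win : Fin 2 × Fin 2 × Fin 2 → ℝ := fun q => ∑ A, ∑ B, ∑ C,
    if A + B + C = orr q.1 q.2.1 q.2.2
    then ‖transform (R q.1) (S q.2.1) (T q.2.2) ψ A B C‖ ^ 2 else 0
  have hwin (q : Fin 2 × Fin 2 × Fin 2) : win q = ∑ x : Fin 2 × Fin 2 × Fin 2,
      if x.1 + x.2.1 + x.2.2 = orr q.1 q.2.1 q.2.2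
      then ‖transform (R q.1) (S q.2.1) (T q.2.2) ψ x.1 x.2.1 x.2.2‖ ^ 2 else 0 := by
    simp only [win, Fintype.sum_prod_type]
  have htotal (q : Fin 2 × Fin 2 × Fin 2) : ∑ x : Fin 2 × Fin 2 × Fin 2,
      ‖transform (R q.1) (S q.2.1) (T q.2.2) ψ x.1 x.2.1 x.2.2‖ ^ 2 = 1 := by
    simp only [Fintype.sum_prod_type]
    rw [sum_norm_sq_transform (hR _) (hS _) (hT _), hunit]
  have hle (q : Fin 2 × Fin 2 × Fin 2) : win q ≤ 1 := by
    rw [hwin, ← htotal q]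
    refine Finset.sum_le_sum fun x _ => ?_
    split_ifs <;> simp
  have hlt : win q₀ < 1 := by
    rw [hwin, ← htotal q₀]
    exact sum_ite_lt_sum_of_exists (fun _ => sq_nonneg _)
      ⟨(A₀, B₀, C₀), hA₀, pow_pos (norm_pos_iff.2 hamp) 2⟩
  calc winProb ψ R S T = 1 / 4 * ∑ q ∈ Questions, win q := rfl
    _ < 1 / 4 * ∑ q ∈ Questions, 1 :=
      mul_lt_mul_of_pos_left (Finset.sum_lt_sum (fun q _ => hle q) ⟨q₀, hq₀, hlt⟩) (by norm_num)
    _ = 1 := by simp [Questions]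

/-- no local strategy using a rank-3 (W-class) state wins the
three-player game with certainty: some losing outcome has nonzero amplitude, and
equivalently the winning probability is strictly less than 1. -/
theorem rank_three_cannot_win_with_certainty (ψ : QState)
    (hunit : ∑ A, ∑ B, ∑ C, ‖ψ A B C‖ ^ 2 = 1)
    (hT : Trip ψ ≠ 0) (hDet : CayleyDet ψ = 0)
    (R S T : Fin 2 → Matrix (Fin 2) (Fin 2) ℂ)
    (hR : ∀ i, (R i).conjTranspose * R i = 1)
    (hS : ∀ i, (S i).conjTranspose * S i = 1)
    (hT' : ∀ i, (T i).conjTranspose * T i = 1) :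
    (∃ q ∈ Questions, ∃ A B C : Fin 2, A + B + C ≠ orr q.1 q.2.1 q.2.2 ∧
      transform (R q.1) (S q.2.1) (T q.2.2) ψ A B C ≠ 0) ∧
    winProb ψ R S T < 1 :=
  have hlose := exists_losing_amplitude hT hDet hR hS hT'
  ⟨hlose, winProb_lt_one hunit hR hS hT' hlose⟩
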